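/- The implicit component of IMEX-NPRK2[42]b is L-stable: with A = [[γ,0],[(−20+23√2)/42,γ]], γ = 1 − √2/2, and b = ((16+9√2)/94, (78−9√2)/94), for every z ∈ ℂ with Re z ≤ 0 the matrix I − zA is invertible and the stability function R(z) = 1 + z·bᵀ(I − zA)⁻¹𝟙 satisfies |R(z)| ≤ 1; moreover bᵀA⁻¹𝟙 = 1, so that R(z) → 0 as |z| → ∞. -/

import Mathlib

/-!
For `A = !![γ, 0; a, γ]` one computes
`R(z) = (1 + (b₁ + b₂ - 2γ) z + (γ² - (b₁ + b₂) γ + a b₂) z²) / (1 - γ z)²`,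
and the coefficient of `z²` equals `γ² (1 - bᵀA⁻¹𝟙)`. Here `b₁ + b₂ = 1` and this coefficient
vanishes, so `bᵀA⁻¹𝟙 = 1` and `R(z) = (1 + (1 - 2γ) z) / (1 - γ z)²`.

For `z = x + iy` with `x ≤ 0` compare `|1 + (1 - 2γ) z|² = (1 + (1 - 2γ) x)² + (1 - 2γ)² y²` with
`|1 - γ z|⁴ = (u + γ² y²)²`, `u = (1 - γ x)² ≥ 1`: the real parts satisfy `|1 + (1 - 2γ) x| ≤ u`
once `γ ≥ 1/4`, and `(1 - 2γ)² ≤ 2γ² ≤ 2uγ²` handles `y²`. The condition `(1 - 2γ)² ≤ 2γ²` means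
`γ ∈ [1 - √2/2, 1 + √2/2]`, and the given `γ` is its left endpoint.

Finally `z (I - zA)⁻¹ = -(A - z⁻¹ I)⁻¹`, so by continuity of matrix inversion at the invertible `A`,
`R(z) → 1 - bᵀA⁻¹𝟙 = 0` as `|z| → ∞`.
-/

open Matrix Filter Topology

section StabilityFunction

variable {ι : Type*} [Fintype ι] [DecidableEq ι]

noncomputable def stabilityFunction {K : Type*} [Field K] (A : Matrix ι ι K) (b : ι → K)
    (z : K) : K :=
  1 + z * (b ⬝ᵥ ((1 - z • A)⁻¹ *ᵥ 1))

lemma stabilityFunction_eq_one_sub {K : Type*} [Field K] (A : Matrix ι ι K) (b : ι → K) {z : K}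
    (hz : z ≠ 0) (h : IsUnit (A - z⁻¹ • 1).det) :
    stabilityFunction A b z = 1 - b ⬝ᵥ ((A - z⁻¹ • 1)⁻¹ *ᵥ 1) := by
  have hsplit : 1 - z • A = (-z) • (A - z⁻¹ • 1) := by
    rw [smul_sub, smul_smul, neg_mul, mul_inv_cancel₀ hz, neg_smul, neg_smul, one_smul]
    abel
  have hinv : ((-z) • (A - z⁻¹ • 1))⁻¹ = (-z)⁻¹ • (A - z⁻¹ • 1)⁻¹ := by
    refine inv_eq_left_inv ?_
    rw [smul_mul_smul_comm, inv_mul_cancel₀ (neg_ne_zero.2 hz), one_smul, nonsing_inv_mul _ h]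
  rw [stabilityFunction, hsplit, hinv, smul_mulVec, dotProduct_smul, smul_eq_mul, ← mul_assoc,
    inv_neg, mul_neg, mul_inv_cancel₀ hz, neg_one_mul, ← sub_eq_add_neg]

theorem tendsto_stabilityFunction_cobounded {𝕜 : Type*} [NontriviallyNormedField 𝕜]
    (A : Matrix ι ι 𝕜) (b : ι → 𝕜) (hA : IsUnit A.det) :
    Tendsto (stabilityFunction A b) (Bornology.cobounded 𝕜) (𝓝 (1 - b ⬝ᵥ (A⁻¹ *ᵥ 1))) := by
  have hshift : Tendsto (fun z : 𝕜 => A - z⁻¹ • 1) (Bornology.cobounded 𝕜) (𝓝 A) := by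
    have : Tendsto (fun w : 𝕜 => A - w • (1 : Matrix ι ι 𝕜)) (𝓝 0) (𝓝 (A - (0 : 𝕜) • 1)) :=
      tendsto_const_nhds.sub (tendsto_id.smul_const _)
    rw [zero_smul, sub_zero] at this
    exact this.comp tendsto_inv₀_cobounded
  have hinv : ContinuousAt Inv.inv A := by
    refine continuousAt_matrix_inv A ?_
    rw [Ring.inverse_eq_inv']
    exact continuousAt_inv₀ hA.ne_zero
  have hlim : Tendsto (fun z => 1 - b ⬝ᵥ ((A - z⁻¹ • 1)⁻¹ *ᵥ 1)) (Bornology.cobounded 𝕜)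
      (𝓝 (1 - b ⬝ᵥ (A⁻¹ *ᵥ 1))) :=
    ((continuous_const.sub (continuous_const.dotProduct
      (continuous_id.matrix_mulVec continuous_const))).tendsto A⁻¹).comp
        (hinv.tendsto.comp hshift)
  refine hlim.congr' ?_
  filter_upwards [hshift.eventually
      ((continuous_id.matrix_det.continuousAt (x := A)).eventually_ne hA.ne_zero),
    Bornology.eventually_ne_cobounded 0] with z hdet hz
  exact (stabilityFunction_eq_one_sub A b hz (isUnit_iff_ne_zero.2 hdet)).symm

end StabilityFunction

section TwoStage

variable {K : Type*} [Field K]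

lemma inv_lowerTriangular_fin_two (p q : K) (hp : p ≠ 0) :
    !![p, 0; q, p]⁻¹ = !![p⁻¹, 0; -q / p ^ 2, p⁻¹] := by
  refine inv_eq_right_inv ?_
  ext i j
  fin_cases i <;> fin_cases j <;> simp [mul_apply, Fin.sum_univ_two, hp]
  field_simp
  ring

lemma one_sub_smul_lowerTriangular_fin_two (γ a z : K) :
    1 - z • !![γ, 0; a, γ] = !![1 - z * γ, 0; -(z * a), 1 - z * γ] := by
  ext i j
  fin_cases i <;> fin_cases j <;> simp

lemma isUnit_one_sub_smul_lowerTriangular_fin_two {γ a z : K} (h : 1 - z * γ ≠ 0) :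
    IsUnit (1 - z • !![γ, 0; a, γ]) := by
  rw [isUnit_iff_isUnit_det, one_sub_smul_lowerTriangular_fin_two, det_fin_two_of, zero_mul,
    sub_zero]
  exact (mul_ne_zero h h).isUnit

lemma stabilityFunction_lowerTriangular_fin_two (γ a b₁ b₂ z : K) (h : 1 - z * γ ≠ 0) :
    stabilityFunction !![γ, 0; a, γ] ![b₁, b₂] z =
      (1 + (b₁ + b₂ - 2 * γ) * z + (γ ^ 2 - (b₁ + b₂) * γ + a * b₂) * z ^ 2) /
        (1 - z * γ) ^ 2 := by
  rw [stabilityFunction, one_sub_smul_lowerTriangular_fin_two, inv_lowerTriangular_fin_two _ _ h]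
  simp only [dotProduct, mulVec, Fin.sum_univ_two, of_apply, cons_val', cons_val_fin_one,
    cons_val_zero, cons_val_one, Pi.one_apply, mul_one, add_zero]
  field_simp
  ring

lemma dotProduct_inv_lowerTriangular_fin_two (γ a b₁ b₂ : K) (hγ : γ ≠ 0) :
    ![b₁, b₂] ⬝ᵥ (!![γ, 0; a, γ]⁻¹ *ᵥ 1) = 1 - (γ ^ 2 - (b₁ + b₂) * γ + a * b₂) / γ ^ 2 := by
  rw [inv_lowerTriangular_fin_two _ _ hγ]
  simp only [dotProduct, mulVec, Fin.sum_univ_two, of_apply, cons_val', cons_val_fin_one,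
    cons_val_zero, cons_val_one, Pi.one_apply, mul_one, add_zero]
  field_simp
  ring

lemma tendsto_stabilityFunction_lowerTriangular_fin_two {𝕜 : Type*} [NontriviallyNormedField 𝕜]
    {γ a b₁ b₂ : 𝕜} (hγ : γ ≠ 0) (hL : γ ^ 2 - (b₁ + b₂) * γ + a * b₂ = 0) :
    Tendsto (stabilityFunction !![γ, 0; a, γ] ![b₁, b₂]) (Bornology.cobounded 𝕜) (𝓝 0) := by
  have hA : IsUnit (!![γ, 0; a, γ]).det := by
    rw [det_fin_two_of, zero_mul, sub_zero]
    exact (mul_ne_zero hγ hγ).isUnit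
  have hlim := tendsto_stabilityFunction_cobounded _ ![b₁, b₂] hA
  rwa [dotProduct_inv_lowerTriangular_fin_two _ _ _ _ hγ, hL, zero_div, sub_zero, sub_self] at hlim

end TwoStage

section AStability

lemma one_sub_mul_ofReal_ne_zero {γ : ℝ} (hγ : 0 ≤ γ) {z : ℂ} (hz : z.re ≤ 0) :
    1 - z * γ ≠ 0 := by
  intro h
  have hre := congrArg Complex.re h
  simp only [Complex.sub_re, Complex.one_re, Complex.mul_re, Complex.ofReal_re,
    Complex.ofReal_im, mul_zero, sub_zero, Complex.zero_re] at hre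
  nlinarith

lemma normSq_one_add_mul_le_normSq_one_sub_mul_sq {γ : ℝ} (hγ : (1 - 2 * γ) ^ 2 ≤ 2 * γ ^ 2)
    {z : ℂ} (hz : z.re ≤ 0) :
    Complex.normSq (1 + ((1 - 2 * γ : ℝ) : ℂ) * z) ≤ Complex.normSq (1 - z * γ) ^ 2 := by
  simp only [Complex.normSq_apply, Complex.add_re, Complex.add_im, Complex.sub_re,
    Complex.sub_im, Complex.mul_re, Complex.mul_im, Complex.one_re, Complex.one_im,
    Complex.ofReal_re, Complex.ofReal_im]
  set x := z.re
  set y := z.im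
  have hγ4 : 1 / 4 ≤ γ := by nlinarith
  have hu : 1 ≤ (1 - γ * x) ^ 2 := one_le_pow₀ (by nlinarith)
  have hre : (1 + (1 - 2 * γ) * x) ^ 2 ≤ ((1 - γ * x) ^ 2) ^ 2 :=
    sq_le_sq' (by nlinarith [mul_nonneg (sub_nonneg.2 hγ4) (neg_nonneg.2 hz), sq_nonneg (γ * x)])
      (by nlinarith [sq_nonneg (γ * x)])
  have him : (1 - 2 * γ) ^ 2 * y ^ 2 ≤ 2 * (1 - γ * x) ^ 2 * γ ^ 2 * y ^ 2 := by
    nlinarith [sq_nonneg y, mul_nonneg (sub_nonneg.2 hu) (sq_nonneg (γ * y))]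
  nlinarith [sq_nonneg (γ ^ 2 * y ^ 2)]

lemma norm_one_add_mul_div_sq_le_one {γ : ℝ} (hγ : (1 - 2 * γ) ^ 2 ≤ 2 * γ ^ 2) {z : ℂ}
    (hz : z.re ≤ 0) : ‖(1 + ((1 - 2 * γ : ℝ) : ℂ) * z) / (1 - z * γ) ^ 2‖ ≤ 1 := by
  have hd : 1 - z * γ ≠ 0 := one_sub_mul_ofReal_ne_zero (by nlinarith) hz
  rw [norm_div, norm_pow, div_le_one (by positivity)]
  refine le_of_pow_le_pow_left₀ two_ne_zero (by positivity) ?_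
  rw [Complex.sq_norm, Complex.sq_norm]
  exact normSq_one_add_mul_le_normSq_one_sub_mul_sq hγ hz

lemma norm_stabilityFunction_lowerTriangular_fin_two_le_one {γ a b₁ b₂ : ℝ} (hb : b₁ + b₂ = 1)
    (hL : γ ^ 2 - (b₁ + b₂) * γ + a * b₂ = 0) (hγ : (1 - 2 * γ) ^ 2 ≤ 2 * γ ^ 2) {z : ℂ}
    (hz : z.re ≤ 0) :
    IsUnit (1 - z • !![(γ : ℂ), 0; (a : ℂ), γ]) ∧
      ‖stabilityFunction !![(γ : ℂ), 0; (a : ℂ), γ] ![(b₁ : ℂ), b₂] z‖ ≤ 1 := by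
  have hd : 1 - z * γ ≠ 0 := one_sub_mul_ofReal_ne_zero (by nlinarith) hz
  have hbC : (b₁ : ℂ) + b₂ = 1 := by exact_mod_cast hb
  have hLC : (γ : ℂ) ^ 2 - ((b₁ : ℂ) + b₂) * γ + a * b₂ = 0 := by exact_mod_cast hL
  refine ⟨isUnit_one_sub_smul_lowerTriangular_fin_two hd, ?_⟩
  rw [stabilityFunction_lowerTriangular_fin_two _ _ _ _ _ hd, hLC, hbC, zero_mul, add_zero]
  convert norm_one_add_mul_div_sq_le_one hγ hz using 4
  push_cast
  ring

end AStability

theorem stmt_11 :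
    let g : ℝ := 1 - Real.sqrt 2 / 2
    let A : Matrix (Fin 2) (Fin 2) ℝ := !![g, 0; (-20 + 23*Real.sqrt 2)/42, g]
    let b : Fin 2 → ℝ := ![(16 + 9*Real.sqrt 2)/94, (78 - 9*Real.sqrt 2)/94]
    let AC : Matrix (Fin 2) (Fin 2) ℂ := A.map Complex.ofReal
    let bC : Fin 2 → ℂ := fun i => (b i : ℂ)
    let R : ℂ → ℂ := fun z => 1 + z * (bC ⬝ᵥ ((1 - z • AC)⁻¹ *ᵥ 1))
    (∀ z : ℂ, z.re ≤ 0 → IsUnit (1 - z • AC) ∧ ‖R z‖ ≤ 1) ∧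
      b ⬝ᵥ (A⁻¹ *ᵥ 1) = 1 ∧
      Filter.Tendsto R (Filter.comap (fun z : ℂ => ‖z‖) Filter.atTop) (nhds 0) := by
  intro g A b AC bC R
  set a : ℝ := (-20 + 23 * Real.sqrt 2) / 42
  have hs : Real.sqrt 2 ^ 2 = 2 := Real.sq_sqrt (by norm_num)
  have hg : 0 < g := by
    have : Real.sqrt 2 < 2 := by nlinarith [Real.sqrt_nonneg 2]
    simp only [g]; linarith
  have hgA : (1 - 2 * g) ^ 2 = 2 * g ^ 2 := by simp only [g]; linear_combination hs / 2
  have hb : b 0 + b 1 = 1 := by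
    simp only [b, cons_val_zero, cons_val_one, cons_val_fin_one]; ring
  have hL : g ^ 2 - (b 0 + b 1) * g + a * b 1 = 0 := by
    simp only [g, b, a, cons_val_zero, cons_val_one, cons_val_fin_one]
    linear_combination (65 / 329) * hs
  have hAC : AC = !![(g : ℂ), 0; (a : ℂ), g] := by
    ext i j; fin_cases i <;> fin_cases j <;> rfl
  have hRdef : R = stabilityFunction !![(g : ℂ), 0; (a : ℂ), g] ![(b 0 : ℂ), b 1] := by
    rw [← hAC]; rfl
  refine ⟨fun z hz => hAC ▸ hRdef ▸
    norm_stabilityFunction_lowerTriangular_fin_two_le_one hb hL hgA.le hz, ?_, ?_⟩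
  · show ![b 0, b 1] ⬝ᵥ (!![g, 0; a, g]⁻¹ *ᵥ 1) = 1
    rw [dotProduct_inv_lowerTriangular_fin_two _ _ _ _ hg.ne', hL, zero_div, sub_zero]
  · rw [hRdef, comap_norm_atTop]
    exact tendsto_stabilityFunction_lowerTriangular_fin_two (by exact_mod_cast hg.ne')
      (by exact_mod_cast hL)
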